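/- Fix u ∈ (0,1) and points u₁ = 0, u_m = 1, and values {v_i}_{i∈[n]} ⊂ [0,1]. Let ℓ, r ≥ 0 with |u·ℓ − (1−u)·r| = Δ. Then one can transfer mass δ_i ≥ 0 from a row with parameter u to the row with parameter 0 (if u·ℓ > (1−u)·r) or to the row with parameter 1 (otherwise), with Σ_i δ_i equal to Δ/u or Δ/(1−u) respectively, so that the calibration constraint u·ℓ' = (1−u)·r' holds after the move, and the increase in cost Σ_i (|u' − v_i| − |u − v_i|)·δ_i is at most Δ, where u' ∈ {0,1} is the destination row. -/

import Mathlib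

/-! Moving mass `Σ δᵢ` from row `u` to row `u'` changes each cost `|u - vᵢ|` by at most `|u' - u|`
(triangle inequality), so the cost rises by at most `|u' - u| · Σ δᵢ`. With `u' = 0` and
`Σ δᵢ = Δ / u`, or `u' = 1` and `Σ δᵢ = Δ / (1 - u)`, this is exactly `Δ`, and the same choice of
mass is what restores the calibration equation `u ℓ' = (1 - u) r'`. -/

open Finset

theorem sum_abs_sub_sub_abs_sub_mul_le {ι : Type*} (s : Finset ι) (a b : ℝ) (v δ : ι → ℝ)
    (hδ : ∀ i ∈ s, 0 ≤ δ i) :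
    ∑ i ∈ s, (|a - v i| - |b - v i|) * δ i ≤ |a - b| * ∑ i ∈ s, δ i := by
  rw [mul_sum]
  refine sum_le_sum fun i hi => mul_le_mul_of_nonneg_right ?_ (hδ i hi)
  simpa using abs_sub_abs_le_abs_sub (a - v i) (b - v i)

theorem stmt11 (n : ℕ) (u : ℝ) (hu : u ∈ Set.Ioo (0 : ℝ) 1)
    (v : Fin n → ℝ)
    (ℓ r : ℝ)
    (Δ : ℝ) (hΔ : |u * ℓ - (1 - u) * r| = Δ)
    (δ : Fin n → ℝ) (hδ : ∀ i, 0 ≤ δ i) :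
    -- Case `u·ℓ > (1-u)·r`: move mass `Δ/u` to the row with parameter `u' = 0`
    ((1 - u) * r < u * ℓ → (∑ i, δ i) = Δ / u →
      u * (ℓ - ∑ i, δ i) = (1 - u) * r ∧
      ∑ i, (|0 - v i| - |u - v i|) * δ i ≤ Δ) ∧
    -- Case `u·ℓ ≤ (1-u)·r`: move mass `Δ/(1-u)` to the row with parameter `u' = 1`
    (u * ℓ ≤ (1 - u) * r → (∑ i, δ i) = Δ / (1 - u) →
      u * ℓ = (1 - u) * (r - ∑ i, δ i) ∧
      ∑ i, (|1 - v i| - |u - v i|) * δ i ≤ Δ) := by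
  obtain ⟨hu0, hu1⟩ := hu
  have hu1' : (1 - u) ≠ 0 := by linarith
  have hcost (a : ℝ) : ∑ i, (|a - v i| - |u - v i|) * δ i ≤ |a - u| * ∑ i, δ i :=
    sum_abs_sub_sub_abs_sub_mul_le _ a u v δ fun i _ => hδ i
  refine ⟨fun hlt hsum => ?_, fun hle hsum => ?_⟩
  · have hΔ' : Δ = u * ℓ - (1 - u) * r := by rw [← hΔ, abs_of_pos (by linarith)]
    refine ⟨by rw [hsum, hΔ']; field_simp; ring, (hcost 0).trans_eq ?_⟩
    rw [hsum, zero_sub, abs_neg, abs_of_pos hu0]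
    field_simp
  · have hΔ' : Δ = (1 - u) * r - u * ℓ := by
      rw [← hΔ, abs_of_nonpos (by linarith), neg_sub]
    refine ⟨by rw [hsum, hΔ']; field_simp; ring, (hcost 1).trans_eq ?_⟩
    rw [hsum, abs_of_pos (by linarith)]
    field_simp
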